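/- For every nonnegative integer n, the reduced factor complexity of the regular paperfolding sequence satisfies ρ_f^red(8n+3) = 6. -/

import Mathlib

/-- The reduction of a word: replace each maximal run of identical characters
by a single character. -/
def red {α : Type*} [DecidableEq α] (w : List α) : List α :=
  w.destutter (· ≠ ·)

/-- The length-`k` factor of the infinite sequence `x` (1-indexed) starting at
position `i`. -/
def factorAt {α : Type*} (x : ℕ → α) (i k : ℕ) : List α :=
  (List.range k).map (fun j => x (i + j))

/-- The reduced factor complexity: the number of length-`n` factors of `x`,
counted up to reduced-equivalence (`red v = red w`). -/
noncomputable def redFactorComplexity {α : Type*} [DecidableEq α]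
    (x : ℕ → α) (n : ℕ) : ℕ :=
  Set.ncard { u : List α | ∃ i ≥ 1, u = red (factorAt x i n) }

/-- The Thue–Morse sequence (1-indexed): `t n` is the parity of the number of
1's in the binary expansion of `n - 1`. -/
def thueMorse (n : ℕ) : Bool :=
  decide ((Nat.digits 2 (n - 1)).sum % 2 = 1)

/-- The number of alternations (occurrences of 01 or 10) in a binary word. -/
def alt (w : List Bool) : ℕ :=
  (List.zipWith (fun a b => a != b) w w.tail).count true

/-- The minimum number of alternations among length-`k` factors of Thue–Morse. -/
noncomputable def tmAltMin (k : ℕ) : ℕ :=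
  sInf { a : ℕ | ∃ i ≥ 1, a = alt (factorAt thueMorse i k) }

/-- The maximum number of alternations among length-`k` factors of Thue–Morse. -/
noncomputable def tmAltMax (k : ℕ) : ℕ :=
  sSup { a : ℕ | ∃ i ≥ 1, a = alt (factorAt thueMorse i k) }

/-- The Thue–Morse morphism `0 → 01`, `1 → 10`. -/
def mu (w : List Bool) : List Bool :=
  w.flatMap (fun b => if b then [true, false] else [false, true])

/-- The regular paperfolding sequence (1-indexed): writing `n = n' * 2^k` with
`n'` odd, `f n = 1` iff `n' ≡ 3 (mod 4)`. -/
def paperfold (n : ℕ) : Bool :=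
  decide ((n / 2 ^ (n.factorization 2)) % 4 = 3)

/-- The reduced abelian complexity: the number of length-`n` factors of `x`,
counted up to the equivalence identifying `v` and `w` whenever `red v` is a
rearrangement of the characters of `red w`. -/
noncomputable def redAbelianComplexity {α : Type*} [DecidableEq α]
    (x : ℕ → α) (n : ℕ) : ℕ :=
  Set.ncard { m : Multiset α | ∃ i ≥ 1, m = ↑(red (factorAt x i n)) }


/-!
A binary word reduces to the alternating word that starts with its first letter and has one
letter more than the word has alternations, so `ρ^red_f(8n+3)` counts the pairs (first letter,
number of alternations) of the windows of length `8n + 3`. The odd-indexed terms of `f`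
alternate, so every stretch `f(2m+1) f(2m+2) f(2m+3)` contains exactly one alternation: a window
starting at an odd position has `4n + 1` alternations, one starting at an even position has
`4n`, `4n + 1` or `4n + 2`. All six pairs occur.
-/

def alternatingWord : Bool → ℕ → List Bool
  | _, 0 => []
  | b, k + 1 => b :: alternatingWord (!b) k

theorem alternatingWord_length (b : Bool) (k : ℕ) : (alternatingWord b k).length = k := by
  induction k generalizing b with
  | zero => rfl
  | succ k ih => simp [alternatingWord, ih]

theorem alternatingWord_inj {b b' : Bool} {k k' : ℕ} (hk : k ≠ 0) :
    alternatingWord b k = alternatingWord b' k' ↔ b = b' ∧ k = k' := by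
  refine ⟨fun h => ?_, by rintro ⟨rfl, rfl⟩; rfl⟩
  have hkk' : k = k' := by rw [← alternatingWord_length b k, h, alternatingWord_length]
  subst hkk'
  obtain ⟨k, rfl⟩ := Nat.exists_eq_succ_of_ne_zero hk
  exact ⟨(List.cons_eq_cons.mp h).1, rfl⟩

theorem alt_cons_cons (a b : Bool) (l : List Bool) :
    alt (a :: b :: l) = (a != b).toNat + alt (b :: l) := by
  cases h : (a != b) <;> simp [alt, h]; omega

theorem red_cons (a : Bool) (l : List Bool) :
    red (a :: l) = alternatingWord a (alt (a :: l) + 1) := by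
  change List.destutter' (· ≠ ·) a l = _
  induction l generalizing a with
  | nil => rfl
  | cons b l ih =>
    rw [alt_cons_cons]
    by_cases hab : a = b
    · subst hab
      rw [List.destutter'_cons_neg l (by simp), ih]
      simp
    · obtain rfl : b = !a := by cases a <;> cases b <;> simp_all
      rw [List.destutter'_cons_pos l hab, ih]
      simp [alternatingWord, Nat.add_comm]

theorem factorAt_succ {α : Type*} (x : ℕ → α) (i k : ℕ) :
    factorAt x i (k + 1) = x i :: factorAt x (i + 1) k := by
  simp [factorAt, List.range_succ_eq_map, Nat.add_comm, Nat.add_left_comm]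

theorem red_factorAt_succ (x : ℕ → Bool) (i k : ℕ) :
    red (factorAt x i (k + 1)) = alternatingWord (x i) (alt (factorAt x i (k + 1)) + 1) := by
  rw [factorAt_succ, red_cons]

theorem alt_factorAt_succ_succ (x : ℕ → Bool) (i k : ℕ) :
    alt (factorAt x i (k + 2)) = (x i != x (i + 1)).toNat + alt (factorAt x (i + 1) (k + 1)) := by
  rw [factorAt_succ, factorAt_succ, alt_cons_cons, ← factorAt_succ]

section OddAlternating

variable {x : ℕ → Bool} (hx : ∀ m, x (2 * m + 3) = !x (2 * m + 1))
include hx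

theorem toNat_bne_add_toNat_bne_eq_one (m : ℕ) :
    (x (2 * m + 1) != x (2 * m + 2)).toNat + (x (2 * m + 2) != x (2 * m + 3)).toNat = 1 := by
  rw [hx]
  cases x (2 * m + 1) <;> cases x (2 * m + 2) <;> rfl

theorem alt_factorAt_two_mul_add_one_two_mul_add_one (a t : ℕ) :
    alt (factorAt x (2 * a + 1) (2 * t + 1)) = t := by
  induction t generalizing a with
  | zero => rfl
  | succ t ih =>
    have hpair : (x (2 * a + 1) != x (2 * a + 1 + 1)).toNat +
        (x (2 * a + 1 + 1) != x (2 * (a + 1) + 1)).toNat = 1 :=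
      toNat_bne_add_toNat_bne_eq_one hx a
    rw [show 2 * (t + 1) + 1 = 2 * t + 1 + 2 by ring, alt_factorAt_succ_succ,
      alt_factorAt_succ_succ, show 2 * a + 1 + 1 + 1 = 2 * (a + 1) + 1 by ring, ih]
    omega

theorem alt_factorAt_two_mul_add_one_two_mul_add_two (a t : ℕ) :
    alt (factorAt x (2 * a + 1) (2 * t + 2)) =
      t + (x (2 * a + 2 * t + 1) != x (2 * a + 2 * t + 2)).toNat := by
  induction t generalizing a with
  | zero =>
    rw [alt_factorAt_succ_succ]
    show _ + 0 = 0 + _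
    simp
  | succ t ih =>
    have hpair : (x (2 * a + 1) != x (2 * a + 1 + 1)).toNat +
        (x (2 * a + 1 + 1) != x (2 * (a + 1) + 1)).toNat = 1 :=
      toNat_bne_add_toNat_bne_eq_one hx a
    rw [show 2 * (t + 1) + 2 = 2 * t + 2 + 2 by ring, alt_factorAt_succ_succ,
      alt_factorAt_succ_succ, show 2 * a + 1 + 1 + 1 = 2 * (a + 1) + 1 by ring, ih,
      show 2 * (a + 1) + 2 * t = 2 * a + 2 * (t + 1) by ring]
    omega

theorem alt_factorAt_two_mul_two_mul_add_three (a t : ℕ) :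
    alt (factorAt x (2 * a) (2 * t + 3)) = (x (2 * a) != x (2 * a + 1)).toNat + t +
      (x (2 * a + 2 * t + 1) != x (2 * a + 2 * t + 2)).toNat := by
  rw [alt_factorAt_succ_succ, alt_factorAt_two_mul_add_one_two_mul_add_two hx, ← Nat.add_assoc]

end OddAlternating

theorem paperfold_of_odd {n : ℕ} (h : n % 2 = 1) : paperfold n = decide (n % 4 = 3) := by
  simp [paperfold, Nat.factorization_eq_zero_of_not_dvd (show ¬2 ∣ n by omega)]

theorem paperfold_eq_of_odd_of_mod_four_eq {i j : ℕ} (hi : i % 2 = 1) (h : i % 4 = j % 4) :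
    paperfold i = paperfold j := by
  rw [paperfold_of_odd hi, paperfold_of_odd (by omega), h]

theorem paperfold_two_mul_add_three (m : ℕ) : paperfold (2 * m + 3) = !paperfold (2 * m + 1) := by
  rw [paperfold_of_odd (by omega), paperfold_of_odd (by omega)]
  by_cases h : (2 * m + 1) % 4 = 3 <;> simp [h] <;> omega

theorem paperfold_two_mul (m : ℕ) : paperfold (2 * m) = paperfold m := by
  rcases eq_or_ne m 0 with rfl | hm
  · rfl
  have hv : (2 * m).factorization 2 = m.factorization 2 + 1 := by
    rw [Nat.factorization_mul two_ne_zero hm, Finsupp.add_apply,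
      Nat.prime_two.factorization_self, Nat.add_comm]
  rw [paperfold, paperfold, hv, pow_succ', Nat.mul_div_mul_left _ _ two_pos]

theorem paperfold_eq_div_two {n : ℕ} (h : 2 ∣ n) : paperfold n = paperfold (n / 2) := by
  obtain ⟨m, rfl⟩ := h
  rw [paperfold_two_mul, Nat.mul_div_cancel_left _ two_pos]

/-- The odd part of `m * q` is `m` times the odd part of `q`. -/
theorem paperfold_mul_of_mod_four_eq_one {m : ℕ} (hm : m % 4 = 1) (q : ℕ) :
    paperfold (m * q) = paperfold q := by
  rcases eq_or_ne q 0 with rfl | hq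
  · simp
  have hv : (m * q).factorization 2 = q.factorization 2 := by
    rw [Nat.factorization_mul (by omega) hq, Finsupp.add_apply,
      Nat.factorization_eq_zero_of_not_dvd (show ¬2 ∣ m by omega), Nat.zero_add]
  rw [paperfold, paperfold, hv, Nat.mul_div_assoc _ (Nat.ordProj_dvd q 2), Nat.mul_mod, hm,
    Nat.one_mul, Nat.mod_mod]

theorem alt_factorAt_paperfold_two_mul_add_one (n a : ℕ) :
    alt (factorAt paperfold (2 * a + 1) (8 * n + 3)) = 4 * n + 1 := by
  rw [show 8 * n + 3 = 2 * (4 * n + 1) + 1 by ring]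
  exact alt_factorAt_two_mul_add_one_two_mul_add_one paperfold_two_mul_add_three a _

theorem alt_factorAt_paperfold_mem_Icc (n i : ℕ) :
    alt (factorAt paperfold i (8 * n + 3)) ∈ Finset.Icc (4 * n) (4 * n + 2) := by
  rw [Finset.mem_Icc]
  rcases Nat.even_or_odd' i with ⟨a, rfl | rfl⟩
  · rw [show 8 * n + 3 = 2 * (4 * n) + 3 by ring,
      alt_factorAt_two_mul_two_mul_add_three paperfold_two_mul_add_three]
    have := Bool.toNat_le (paperfold (2 * a) != paperfold (2 * a + 1))
    have := Bool.toNat_le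
      (paperfold (2 * a + 2 * (4 * n) + 1) != paperfold (2 * a + 2 * (4 * n) + 2))
    omega
  · rw [alt_factorAt_paperfold_two_mul_add_one]
    omega

/-- Since `4n + 1 ≡ 1 (mod 4)`, the two ends of the window at `2c(4n+1)` look like the
window `f(2c) f(2c+1) f(2c+2)`. -/
theorem alt_factorAt_paperfold_two_mul_mul (c n : ℕ) :
    alt (factorAt paperfold (2 * c * (4 * n + 1)) (8 * n + 3)) =
      (paperfold (2 * c) != paperfold (2 * c + 1)).toNat + 4 * n +
        (paperfold (2 * c + 1) != paperfold (2 * c + 2)).toNat := by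
  rw [show 8 * n + 3 = 2 * (4 * n) + 3 by ring, mul_assoc,
    alt_factorAt_two_mul_two_mul_add_three paperfold_two_mul_add_three]
  have hstart : paperfold (2 * (c * (4 * n + 1))) = paperfold (2 * c) := by
    rw [show 2 * (c * (4 * n + 1)) = (4 * n + 1) * (2 * c) by ring,
      paperfold_mul_of_mod_four_eq_one (by omega)]
  have hend : paperfold (2 * (c * (4 * n + 1)) + 2 * (4 * n) + 2) = paperfold (2 * c + 2) := by
    rw [show 2 * (c * (4 * n + 1)) + 2 * (4 * n) + 2 = (4 * n + 1) * (2 * c + 2) by ring,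
      paperfold_mul_of_mod_four_eq_one (by omega)]
  have hodd₁ : paperfold (2 * (c * (4 * n + 1)) + 1) = paperfold (2 * c + 1) :=
    paperfold_eq_of_odd_of_mod_four_eq (by omega) (by ring_nf; omega)
  have hodd₂ : paperfold (2 * (c * (4 * n + 1)) + 2 * (4 * n) + 1) = paperfold (2 * c + 1) :=
    paperfold_eq_of_odd_of_mod_four_eq (by omega) (by ring_nf; omega)
  rw [hstart, hend, hodd₁, hodd₂]

theorem red_factorAt_paperfold_two_mul_add_one (n a : ℕ) :
    red (factorAt paperfold (2 * a + 1) (8 * n + 3)) =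
      alternatingWord (paperfold (2 * a + 1)) (4 * n + 2) := by
  rw [red_factorAt_succ, alt_factorAt_paperfold_two_mul_add_one]

theorem red_factorAt_paperfold_two_mul_mul (c n : ℕ) :
    red (factorAt paperfold (2 * c * (4 * n + 1)) (8 * n + 3)) =
      alternatingWord (paperfold (2 * c))
        (4 * n + ((paperfold (2 * c) != paperfold (2 * c + 1)).toNat +
          (paperfold (2 * c + 1) != paperfold (2 * c + 2)).toNat + 1)) := by
  rw [red_factorAt_succ, alt_factorAt_paperfold_two_mul_mul,
    show 2 * c * (4 * n + 1) = (4 * n + 1) * (2 * c) by ring,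
    paperfold_mul_of_mod_four_eq_one (by omega)]
  congr 1
  omega

/-- Witnesses: the windows at `1` and `3` have `4n + 1` alternations, and the window at
`2c(4n+1)` has `4n` plus those of `f(2c) f(2c+1) f(2c+2)`, which are `0` for `c = 4, 11` and
`2` for `c = 1, 6`. -/
theorem exists_red_factorAt_paperfold_eq (n : ℕ) (b : Bool) {k : ℕ}
    (hk : k ∈ Finset.Icc (4 * n + 1) (4 * n + 3)) :
    ∃ i ≥ 1, red (factorAt paperfold i (8 * n + 3)) = alternatingWord b k := by
  rw [Finset.mem_Icc] at hk
  obtain rfl | rfl | rfl : k = 4 * n + 1 ∨ k = 4 * n + 2 ∨ k = 4 * n + 3 := by omega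
  all_goals cases b
  · exact ⟨2 * 4 * (4 * n + 1), by omega, by
      rw [red_factorAt_paperfold_two_mul_mul]
      simp (disch := decide) [paperfold_of_odd, paperfold_eq_div_two]⟩
  · exact ⟨2 * 11 * (4 * n + 1), by omega, by
      rw [red_factorAt_paperfold_two_mul_mul]
      simp (disch := decide) [paperfold_of_odd, paperfold_eq_div_two]⟩
  · exact ⟨2 * 0 + 1, le_refl 1, by
      rw [red_factorAt_paperfold_two_mul_add_one]
      simp (disch := decide) [paperfold_of_odd]⟩
  · exact ⟨2 * 1 + 1, by omega, by
      rw [red_factorAt_paperfold_two_mul_add_one]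
      simp (disch := decide) [paperfold_of_odd]⟩
  · exact ⟨2 * 1 * (4 * n + 1), by omega, by
      rw [red_factorAt_paperfold_two_mul_mul]
      simp (disch := decide) [paperfold_of_odd, paperfold_eq_div_two]⟩
  · exact ⟨2 * 6 * (4 * n + 1), by omega, by
      rw [red_factorAt_paperfold_two_mul_mul]
      simp (disch := decide) [paperfold_of_odd, paperfold_eq_div_two]⟩

theorem setOf_red_factorAt_paperfold (n : ℕ) :
    { u | ∃ i ≥ 1, u = red (factorAt paperfold i (8 * n + 3)) } =
      ↑((Finset.univ ×ˢ Finset.Icc (4 * n + 1) (4 * n + 3)).image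
        fun p : Bool × ℕ => alternatingWord p.1 p.2) := by
  ext u
  simp only [Set.mem_ofPred_eq, Finset.coe_image, Set.mem_image, Finset.mem_coe,
    Finset.mem_product, Finset.mem_univ, true_and, Prod.exists]
  constructor
  · rintro ⟨i, -, rfl⟩
    refine ⟨paperfold i, alt (factorAt paperfold i (8 * n + 3)) + 1, ?_,
      (red_factorAt_succ _ _ _).symm⟩
    have := Finset.mem_Icc.mp (alt_factorAt_paperfold_mem_Icc n i)
    rw [Finset.mem_Icc]
    omega
  · rintro ⟨b, k, hk, rfl⟩
    obtain ⟨i, hi, h⟩ := exists_red_factorAt_paperfold_eq n b hk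
    exact ⟨i, hi, h.symm⟩

theorem stmt15 (n : ℕ) :
    redFactorComplexity paperfold (8 * n + 3) = 6 := by
  rw [redFactorComplexity, setOf_red_factorAt_paperfold, Set.ncard_coe_finset,
    Finset.card_image_of_injOn]
  · simp
  · rintro ⟨b, k⟩ hbk ⟨b', k'⟩ - h
    have hk : k ≠ 0 := by simp at hbk; omega
    simpa [alternatingWord_inj hk] using h
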